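/- arXiv:math/0604594 — 2 statements merged into one kernel-verified Lean document; each statement's English description precedes it below -/
import Mathlib

section
/- Let K ⊂ ℝⁿ be a centrally symmetric convex body of volume 1 which is 2-convex with constant α > 0. Fix a unit vector θ ∈ S^{n−1} and let w = sup_{x∈K} |⟨x,θ⟩|. Then for every t > 0, the Lebesgue measure of {x ∈ K : ⟨x,θ⟩ > t} is at most 2·exp(−2αn(t/w)²). -/
open MeasureTheory
open scoped RealInnerProductSpace

noncomputable section

/-- A centrally symmetric convex body: compact, convex, with nonempty interior,
and symmetric about the origin. -/
def IsSymmConvexBody {E : Type*} [NormedAddCommGroup E] [NormedSpace ℝ E]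
    (K : Set E) : Prop :=
  IsCompact K ∧ Convex ℝ K ∧ (interior K).Nonempty ∧ K = -K

/-- The modulus of convexity of `K`, defined via the gauge (Minkowski functional) of `K`. -/
def modulusOfConvexity {E : Type*} [AddCommGroup E] [Module ℝ E]
    (K : Set E) (ε : ℝ) : ℝ :=
  sInf { d | ∃ x y : E, gauge K x ≤ 1 ∧ gauge K y ≤ 1 ∧ ε ≤ gauge K (x - y) ∧
    d = 1 - gauge K ((2:ℝ)⁻¹ • (x + y)) }

/-- `K` is 2-convex with constant `α`: `δ_K(ε) ≥ α ε²` for all `0 < ε ≤ 2`. -/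
def IsTwoConvex {E : Type*} [AddCommGroup E] [Module ℝ E]
    (K : Set E) (α : ℝ) : Prop :=
  ∀ ε : ℝ, 0 < ε → ε ≤ 2 → α * ε ^ 2 ≤ modulusOfConvexity K ε

/-!
Let `B = K ∩ {⟪x, θ⟫ ≥ t}`. For `x, y ∈ B` the points `x` and `-y` lie in `K` and
`‖x + y‖_K ≥ 2t/w`, so 2-convexity puts `½ (x - y)` in `(1 - 4α(t/w)²) K`. The case
`vol B ≤ vol (½ (B - B))` of Brunn–Minkowski then gives
`vol B ≤ (1 - 4α(t/w)²)ⁿ ≤ exp (-4αn(t/w)²)`.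

That inequality is proved by induction on the dimension. For a convex body `A ⊆ ℝ × F`, the
one-dimensional inequality `vol S + vol T ≤ vol (S + T)` shows that the superlevel sets of the
fibre volumes `y ↦ vol A_y` are convex and that their half-difference sets lie in the
corresponding superlevel sets for `½ (A - A)`; integrating over the levels concludes.
-/

open Set Topology
open scoped Pointwise ENNReal

theorem Real.volume_add_volume_le_volume_add {S T : Set ℝ} (hS : IsCompact S) (hT : IsCompact T)
    (hS₀ : S.Nonempty) (hT₀ : T.Nonempty) :
    volume S + volume T ≤ volume (S + T) := by
  obtain ⟨a, haS, ha⟩ := hS.exists_isLeast hS₀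
  obtain ⟨b, hbT, hb⟩ := hT.exists_isGreatest hT₀
  -- `b +ᵥ S` and `a +ᵥ T` are copies of `S` and `T` inside `S + T` meeting only at `a + b`
  have hinter : (b +ᵥ S) ∩ (a +ᵥ T) ⊆ {a + b} := by
    rintro _ ⟨⟨s, hs, rfl⟩, ⟨u, hu, hsu⟩⟩
    have : s + b = a + b := by
      simp only [vadd_eq_add] at hsu ⊢
      linarith [ha hs, hb hu]
    simp [vadd_eq_add, add_comm b s, this]
  have hunion : (b +ᵥ S) ∪ (a +ᵥ T) ⊆ S + T := by
    rintro _ (⟨s, hs, rfl⟩ | ⟨u, hu, rfl⟩)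
    · simpa only [vadd_eq_add, add_comm b s] using add_mem_add hs hbT
    · exact add_mem_add haS hu
  calc volume S + volume T = volume (b +ᵥ S) + volume (a +ᵥ T) := by
        rw [measure_vadd, measure_vadd]
    _ = volume ((b +ᵥ S) ∪ (a +ᵥ T)) := by
        rw [← measure_union_add_inter _ ((hT.vadd a).measurableSet),
          measure_mono_null hinter (measure_singleton _), add_zero]
    _ ≤ volume (S + T) := measure_mono hunion

theorem Real.smul_volume_add_smul_volume_le {S T : Set ℝ} (hS : IsCompact S) (hT : IsCompact T)
    (hS₀ : S.Nonempty) (hT₀ : T.Nonempty) {a b : ℝ} (ha : 0 ≤ a) (hb : 0 ≤ b) :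
    ENNReal.ofReal a * volume S + ENNReal.ofReal b * volume T ≤ volume (a • S + b • T) := by
  have hsmul : ∀ (c : ℝ) (U : Set ℝ), 0 ≤ c → volume (c • U) = ENNReal.ofReal c * volume U :=
    fun c U hc => by rw [Measure.addHaar_smul, Module.finrank_self, pow_one, abs_of_nonneg hc]
  rw [← hsmul a S ha, ← hsmul b T hb]
  exact Real.volume_add_volume_le_volume_add (hS.smul a) (hT.smul b) hS₀.smul_set hT₀.smul_set

theorem lintegral_eq_lintegral_meas_ofReal_le {α : Type*} [MeasurableSpace α] {μ : Measure α}
    {f : α → ℝ≥0∞} (hf : AEMeasurable f μ) (hf_top : ∀ x, f x ≠ ∞) :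
    ∫⁻ x, f x ∂μ = ∫⁻ t in Ioi 0, μ {x | ENNReal.ofReal t ≤ f x} := by
  simp_rw [ENNReal.ofReal_le_iff_le_toReal (hf_top _)]
  rw [← lintegral_eq_lintegral_meas_le μ (ae_of_all _ fun _ => ENNReal.toReal_nonneg)
    hf.ennreal_toReal]
  exact lintegral_congr fun x => (ENNReal.ofReal_toReal (hf_top x)).symm

theorem lintegral_le_lintegral_of_forall_meas_le {α β : Type*} [MeasurableSpace α]
    [MeasurableSpace β] {μ : Measure α} {ν : Measure β} {f : α → ℝ≥0∞} {g : β → ℝ≥0∞}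
    (hf : AEMeasurable f μ) (hg : AEMeasurable g ν) (hf_top : ∀ x, f x ≠ ∞) (hg_top : ∀ y, g y ≠ ∞)
    (h : ∀ t : ℝ, 0 < t → μ {x | ENNReal.ofReal t ≤ f x} ≤ ν {y | ENNReal.ofReal t ≤ g y}) :
    ∫⁻ x, f x ∂μ ≤ ∫⁻ y, g y ∂ν := by
  rw [lintegral_eq_lintegral_meas_ofReal_le hf hf_top,
    lintegral_eq_lintegral_meas_ofReal_le hg hg_top]
  exact lintegral_mono_ae ((ae_restrict_iff' measurableSet_Ioi).2 (ae_of_all _ h))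

def fiber {F : Type*} (A : Set (ℝ × F)) (y : F) : Set ℝ := (·, y) ⁻¹' A

section Fiber

variable {F : Type*}

theorem smul_fiber_add_smul_fiber_subset [AddCommGroup F] [Module ℝ F] (a b : ℝ)
    (A B : Set (ℝ × F)) (y z : F) :
    a • fiber A y + b • fiber B z ⊆ fiber (a • A + b • B) (a • y + b • z) := by
  rintro _ ⟨_, ⟨r, hr, rfl⟩, _, ⟨s, hs, rfl⟩, rfl⟩
  exact ⟨_, smul_mem_smul_set hr, _, smul_mem_smul_set hs, by simp⟩

theorem fiber_neg [AddCommGroup F] (A : Set (ℝ × F)) (y : F) :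
    fiber (-A) (-y) = -fiber A y := by
  ext r
  simp [fiber]

variable [TopologicalSpace F] [T2Space F]

theorem IsCompact.fiber {A : Set (ℝ × F)} (hA : IsCompact A) (y : F) :
    IsCompact (fiber A y) :=
  (hA.image continuous_fst).of_isClosed_subset
    (hA.isClosed.preimage (Continuous.prodMk_left y)) fun r hr => ⟨(r, y), hr, rfl⟩

theorem upperSemicontinuous_volume_fiber {A : Set (ℝ × F)} (hA : IsCompact A) :
    UpperSemicontinuous fun y => volume (fiber A y) := by
  intro y c hc
  obtain ⟨U, hAU, hU, hUc⟩ := Set.exists_isOpen_lt_of_lt _ _ hc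
  have hC : IsCompact (Prod.snd '' (A ∩ Prod.fst ⁻¹' Uᶜ)) :=
    (hA.inter_right (hU.isClosed_compl.preimage continuous_fst)).image continuous_snd
  have hy : y ∉ Prod.snd '' (A ∩ Prod.fst ⁻¹' Uᶜ) := by
    rintro ⟨⟨r, _⟩, ⟨hr, hrU⟩, rfl⟩
    exact hrU (hAU hr)
  filter_upwards [hC.isClosed.isOpen_compl.mem_nhds hy] with z hz
  refine (measure_mono fun r hr => ?_).trans_lt hUc
  by_contra hrU
  exact hz ⟨(r, z), ⟨hr, hrU⟩, rfl⟩

theorem isCompact_setOf_le_volume_fiber {A : Set (ℝ × F)} (hA : IsCompact A) {r : ℝ≥0∞}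
    (hr : r ≠ 0) :
    IsCompact {y | r ≤ volume (fiber A y)} := by
  refine (hA.image continuous_snd).of_isClosed_subset
    ((upperSemicontinuous_volume_fiber hA).isClosed_preimage r) fun y hy => ?_
  obtain ⟨s, hs⟩ := nonempty_of_measure_ne_zero (ne_bot_of_le_ne_bot hr hy)
  exact ⟨(s, y), hs, rfl⟩

variable [AddCommGroup F] [Module ℝ F]

theorem le_volume_fiber_smul_add_smul {A B : Set (ℝ × F)} (hA : IsCompact A) (hB : IsCompact B)
    {a b : ℝ} (ha : 0 ≤ a) (hb : 0 ≤ b) (hab : a + b = 1) {r : ℝ≥0∞} (hr : r ≠ 0) {y z : F}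
    (hy : r ≤ volume (fiber A y)) (hz : r ≤ volume (fiber B z)) :
    r ≤ volume (fiber (a • A + b • B) (a • y + b • z)) := by
  have hne : ∀ {S : Set ℝ}, r ≤ volume S → S.Nonempty := fun hS =>
    nonempty_of_measure_ne_zero (ne_bot_of_le_ne_bot hr hS)
  calc r = ENNReal.ofReal a * r + ENNReal.ofReal b * r := by
        rw [← add_mul, ← ENNReal.ofReal_add ha hb, hab, ENNReal.ofReal_one, one_mul]
    _ ≤ ENNReal.ofReal a * volume (fiber A y) + ENNReal.ofReal b * volume (fiber B z) := by
        gcongr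
    _ ≤ volume (a • fiber A y + b • fiber B z) :=
        Real.smul_volume_add_smul_volume_le (hA.fiber y) (hB.fiber z) (hne hy) (hne hz) ha hb
    _ ≤ _ := measure_mono (smul_fiber_add_smul_fiber_subset a b A B y z)

variable {A : Set (ℝ × F)} {r : ℝ≥0∞}

theorem convex_setOf_le_volume_fiber (hAc : Convex ℝ A) (hA : IsCompact A) (hr : r ≠ 0) :
    Convex ℝ {y | r ≤ volume (fiber A y)} := fun _ hy _ hz _ _ ha hb hab =>
  (le_volume_fiber_smul_add_smul hA hA ha hb hab hr hy hz).trans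
    (measure_mono fun _ hs => hAc.set_combo_subset ha hb hab hs)

theorem half_sub_setOf_le_volume_fiber_subset [IsTopologicalAddGroup F] (hA : IsCompact A)
    (hr : r ≠ 0) :
    (2 : ℝ)⁻¹ • ({y | r ≤ volume (fiber A y)} - {y | r ≤ volume (fiber A y)}) ⊆
      {y | r ≤ volume (fiber ((2 : ℝ)⁻¹ • (A - A)) y)} := by
  rintro _ ⟨_, ⟨y, hy, z, hz, rfl⟩, rfl⟩
  have hz' : r ≤ volume (fiber (-A) (-z)) := by rwa [fiber_neg, Measure.measure_neg]
  have h := le_volume_fiber_smul_add_smul hA hA.neg (by norm_num) (by norm_num)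
    (by norm_num : (2 : ℝ)⁻¹ + 2⁻¹ = 1) hr hy hz'
  rwa [← smul_add, ← smul_add, ← sub_eq_add_neg, ← sub_eq_add_neg] at h

end Fiber

/-- The case `vol A ≤ vol (½ A + ½ (-A))` of the Brunn–Minkowski inequality. -/
def HalfDifferenceVolumeIneq (E : Type*) [AddCommGroup E] [Module ℝ E] [TopologicalSpace E]
    [MeasureSpace E] : Prop :=
  ∀ A : Set E, Convex ℝ A → IsCompact A → volume A ≤ volume ((2 : ℝ)⁻¹ • (A - A))

namespace HalfDifferenceVolumeIneq

variable {E F : Type*} [AddCommGroup E] [Module ℝ E] [TopologicalSpace E] [MeasureSpace E]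

theorem of_subsingleton [Subsingleton E] : HalfDifferenceVolumeIneq E := by
  intro A _ _
  refine measure_mono fun a ha => ?_
  rw [Subsingleton.elim a ((2 : ℝ)⁻¹ • (a - a))]
  exact smul_mem_smul_set (sub_mem_sub ha ha)

theorem of_measurePreserving [AddCommGroup F] [Module ℝ F] [TopologicalSpace F] [MeasureSpace F]
    (hF : HalfDifferenceVolumeIneq F) (e : E ≃ᵐ F) (he : MeasurePreserving e)
    (hlin : IsLinearMap ℝ e) (hcont : Continuous e) : HalfDifferenceVolumeIneq E := by
  intro A hAc hA
  have himage : ∀ S, volume (e '' S) = volume S := fun S => by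
    rw [← he.measure_preimage_equiv, e.preimage_image]
  have h := hF (hlin.mk' e '' A) (hAc.linear_image _) (hA.image hcont)
  rw [← image_sub, ← image_smul_set] at h
  exact (himage A).symm.trans_le (h.trans_eq (himage _))

theorem prod [NormedAddCommGroup F] [NormedSpace ℝ F] [MeasureSpace F] [BorelSpace F]
    [SFinite (volume : Measure F)] (hF : HalfDifferenceVolumeIneq F) :
    HalfDifferenceVolumeIneq (ℝ × F) := by
  intro A hAc hA
  have hM : IsCompact ((2 : ℝ)⁻¹ • (A - A)) := (sub_eq_add_neg A A ▸ hA.add hA.neg).smul _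
  rw [Measure.volume_eq_prod, Measure.prod_apply_symm hA.measurableSet,
    Measure.prod_apply_symm hM.measurableSet]
  -- by Fubini, it suffices to compare the superlevel sets of the fibre volumes
  refine lintegral_le_lintegral_of_forall_meas_le
    (measurable_measure_prodMk_right hA.measurableSet).aemeasurable
    (measurable_measure_prodMk_right hM.measurableSet).aemeasurable
    (fun y => (hA.fiber y).measure_lt_top.ne) (fun y => (hM.fiber y).measure_lt_top.ne)
    fun t ht => ?_
  have hr : ENNReal.ofReal t ≠ 0 := (ENNReal.ofReal_pos.2 ht).ne'
  calc _ ≤ volume ((2 : ℝ)⁻¹ • ({y | ENNReal.ofReal t ≤ volume (fiber A y)} -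
        {y | ENNReal.ofReal t ≤ volume (fiber A y)})) :=
        hF _ (convex_setOf_le_volume_fiber hAc hA hr) (isCompact_setOf_le_volume_fiber hA hr)
    _ ≤ _ := measure_mono (half_sub_setOf_le_volume_fiber_subset hA hr)

end HalfDifferenceVolumeIneq

theorem halfDifferenceVolumeIneq_pi : ∀ m : ℕ, HalfDifferenceVolumeIneq (Fin m → ℝ)
  | 0 => .of_subsingleton
  | m + 1 => (halfDifferenceVolumeIneq_pi m).prod.of_measurePreserving
      (MeasurableEquiv.piFinSuccAbove (fun _ => ℝ) 0) (volume_preserving_piFinSuccAbove _ 0)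
      ⟨fun _ _ => rfl, fun _ _ => rfl⟩
      ((continuous_apply 0).prodMk (continuous_pi fun _ => continuous_apply _))

theorem halfDifferenceVolumeIneq_euclideanSpace (n : ℕ) :
    HalfDifferenceVolumeIneq (EuclideanSpace ℝ (Fin n)) :=
  (halfDifferenceVolumeIneq_pi n).of_measurePreserving (MeasurableEquiv.toLp 2 (Fin n → ℝ)).symm
    (EuclideanSpace.volume_preserving_symm_measurableEquiv_toLp (Fin n))
    ⟨fun _ _ => rfl, fun _ _ => rfl⟩ (PiLp.continuous_ofLp 2 _)

section ConvexBody

variable {E : Type*} [NormedAddCommGroup E] [NormedSpace ℝ E] {K : Set E}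

theorem modulusOfConvexity_le (hKc : Convex ℝ K) (hKa : Absorbent ℝ K) {ε : ℝ} {x y : E}
    (hx : gauge K x ≤ 1) (hy : gauge K y ≤ 1) (hxy : ε ≤ gauge K (x - y)) :
    modulusOfConvexity K ε ≤ 1 - gauge K ((2 : ℝ)⁻¹ • (x + y)) := by
  refine csInf_le ⟨0, ?_⟩ ⟨x, y, hx, hy, hxy, rfl⟩
  rintro _ ⟨a, b, ha, hb, -, rfl⟩
  rw [gauge_smul_of_nonneg (by norm_num), smul_eq_mul]
  linarith [gauge_add_le hKc hKa a b]

theorem IsTwoConvex.gauge_midpoint_le {α : ℝ} (h2 : IsTwoConvex K α) (hKc : Convex ℝ K)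
    (hKa : Absorbent ℝ K) {ε : ℝ} (hε₀ : 0 < ε) (hε₂ : ε ≤ 2) {x y : E} (hx : gauge K x ≤ 1)
    (hy : gauge K y ≤ 1) (hxy : ε ≤ gauge K (x - y)) :
    gauge K ((2 : ℝ)⁻¹ • (x + y)) ≤ 1 - α * ε ^ 2 := by
  linarith [h2 ε hε₀ hε₂, modulusOfConvexity_le hKc hKa hx hy hxy]

namespace IsSymmConvexBody

theorem neg_mem (hK : IsSymmConvexBody K) {x : E} (hx : x ∈ K) : -x ∈ K := by
  rw [hK.2.2.2]
  exact Set.neg_mem_neg.2 hx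

theorem mem_nhds_zero (hK : IsSymmConvexBody K) : K ∈ 𝓝 0 := by
  obtain ⟨z, hz⟩ := hK.2.2.1
  have h := hK.2.1.combo_interior_self_mem_interior hz (hK.neg_mem (interior_subset hz))
    (by norm_num : (0 : ℝ) < 2⁻¹) (by norm_num : (0 : ℝ) ≤ 2⁻¹) (by norm_num)
  rw [smul_neg, add_neg_cancel] at h
  exact mem_interior_iff_mem_nhds.1 h

theorem mem_smul_of_gauge_le (hK : IsSymmConvexBody K) {a : ℝ} (ha : 0 ≤ a) {x : E}
    (hx : gauge K x ≤ a) : x ∈ a • K := by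
  rcases ha.eq_or_lt with rfl | ha
  · have hx0 : x = 0 := (gauge_eq_zero (absorbent_nhds_zero hK.mem_nhds_zero)
      (hK.1.isVonNBounded ℝ)).1 (hx.antisymm (gauge_nonneg x))
    exact hx0 ▸ zero_mem_smul_set (mem_of_mem_nhds hK.mem_nhds_zero)
  · rw [mem_smul_set_iff_inv_smul_mem₀ ha.ne', ← hK.1.isClosed.closure_eq,
      ← gauge_le_one_iff_mem_closure hK.2.1 hK.mem_nhds_zero,
      gauge_smul_of_nonneg (inv_nonneg.2 ha.le), smul_eq_mul, inv_mul_le_one₀ ha]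
    exact hx

theorem le_mul_gauge (hK : IsSymmConvexBody K) {f : E →ₗ[ℝ] ℝ} {w : ℝ} (hf : ∀ x ∈ K, f x ≤ w)
    (z : E) : f z ≤ w * gauge K z := by
  obtain ⟨k, hk, hkz⟩ := hK.mem_smul_of_gauge_le (gauge_nonneg z) le_rfl
  calc f z = f (gauge K z • k) := congrArg f hkz.symm
    _ = gauge K z * f k := by rw [f.map_smul, smul_eq_mul]
    _ ≤ gauge K z * w := mul_le_mul_of_nonneg_left (hf k hk) (gauge_nonneg z)
    _ = w * gauge K z := mul_comm _ _

theorem gauge_half_sub_le_of_le_apply (hK : IsSymmConvexBody K) {α : ℝ} (h2 : IsTwoConvex K α)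
    {f : E →ₗ[ℝ] ℝ} {w t : ℝ} (hf : ∀ x ∈ K, f x ≤ w) (ht : 0 < t) (htw : t ≤ w) {x y : E}
    (hx : x ∈ K) (hy : y ∈ K) (hxt : t ≤ f x) (hyt : t ≤ f y) :
    gauge K ((2 : ℝ)⁻¹ • (x - y)) ≤ 1 - α * (2 * (t / w)) ^ 2 := by
  have hw : 0 < w := ht.trans_le htw
  have hsum : 2 * (t / w) ≤ gauge K (x - -y) := by
    rw [sub_neg_eq_add, ← mul_div_assoc, div_le_iff₀ hw, mul_comm]
    linarith [hK.le_mul_gauge hf (x + y), f.map_add x y]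
  rw [sub_eq_add_neg]
  exact h2.gauge_midpoint_le hK.2.1 (absorbent_nhds_zero hK.mem_nhds_zero) (by positivity)
    (by linarith [(div_le_one hw).2 htw]) (gauge_le_one_of_mem hx)
    (gauge_le_one_of_mem (hK.neg_mem hy)) hsum

end IsSymmConvexBody

theorem HalfDifferenceVolumeIneq.volume_le_of_gauge_half_sub_le [FiniteDimensional ℝ E]
    [MeasureSpace E] [BorelSpace E] [(volume : Measure E).IsAddHaarMeasure]
    (hE : HalfDifferenceVolumeIneq E) (hK : IsSymmConvexBody K) {B : Set E} (hBc : Convex ℝ B)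
    (hB : IsCompact B) {c : ℝ} (hc : 0 ≤ c)
    (hBK : ∀ x ∈ B, ∀ y ∈ B, gauge K ((2 : ℝ)⁻¹ • (x - y)) ≤ c) :
    volume B ≤ ENNReal.ofReal (c ^ Module.finrank ℝ E) * volume K := by
  calc volume B ≤ volume ((2 : ℝ)⁻¹ • (B - B)) := hE B hBc hB
    _ ≤ volume (c • K) := measure_mono ?_
    _ = _ := by rw [Measure.addHaar_smul, abs_of_nonneg (pow_nonneg hc _)]
  rintro _ ⟨_, ⟨x, hx, y, hy, rfl⟩, rfl⟩
  exact hK.mem_smul_of_gauge_le hc (hBK x hx y hy)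

end ConvexBody

theorem pow_one_sub_mul_sq_le_two_mul_exp {α s : ℝ} (hα : 0 ≤ α) (hc : 0 ≤ 1 - α * (2 * s) ^ 2)
    (n : ℕ) : (1 - α * (2 * s) ^ 2) ^ n ≤ 2 * Real.exp (-2 * α * n * s ^ 2) := by
  have h4 : -4 * α * n * s ^ 2 ≤ -2 * α * n * s ^ 2 := by
    have : 0 ≤ α * n * s ^ 2 := by positivity
    linarith
  calc (1 - α * (2 * s) ^ 2) ^ n ≤ Real.exp (-(α * (2 * s) ^ 2)) ^ n :=
        pow_le_pow_left₀ hc (Real.one_sub_le_exp_neg _) n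
    _ = Real.exp (-4 * α * n * s ^ 2) := by rw [← Real.exp_nat_mul]; ring_nf
    _ ≤ 2 * Real.exp (-2 * α * n * s ^ 2) := by
        linarith [Real.exp_le_exp.2 h4, Real.exp_pos (-2 * α * n * s ^ 2)]

theorem psi2_decay_of_twoConvex_general {n : ℕ} (K : Set (EuclideanSpace ℝ (Fin n)))
    (hK : IsSymmConvexBody K) (hvol : volume K = 1)
    (α : ℝ) (hα : 0 < α) (h2 : IsTwoConvex K α)
    (θ : EuclideanSpace ℝ (Fin n))
    (w : ℝ) (hw : IsLUB ((fun x => abs ⟪x, θ⟫) '' K) w)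
    (t : ℝ) (ht : 0 < t) :
    volume {x | x ∈ K ∧ t < ⟪x, θ⟫} ≤
      ENNReal.ofReal (2 * Real.exp (-2 * α * n * (t / w) ^ 2)) := by
  have hle : ∀ x ∈ K, ⟪x, θ⟫ ≤ w := fun x hx => (le_abs_self _).trans (hw.1 ⟨x, hx, rfl⟩)
  set B := K ∩ {x | t ≤ ⟪x, θ⟫}
  have hsub : {x | x ∈ K ∧ t < ⟪x, θ⟫} ⊆ B := fun x hx => ⟨hx.1, hx.2.le⟩
  rcases B.eq_empty_or_nonempty with hB₀ | ⟨x₀, hx₀⟩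
  · rw [measure_mono_null hsub (hB₀ ▸ measure_empty)]
    exact bot_le
  have htw : t ≤ w := hx₀.2.trans (hle x₀ hx₀.1)
  have hcap : ∀ x ∈ B, ∀ y ∈ B, gauge K ((2 : ℝ)⁻¹ • (x - y)) ≤ 1 - α * (2 * (t / w)) ^ 2 :=
    fun x hx y hy => hK.gauge_half_sub_le_of_le_apply h2 (f := (innerₗ _).flip θ) hle ht htw
      hx.1 hy.1 hx.2 hy.2
  have hc := (gauge_nonneg _).trans (hcap x₀ hx₀ x₀ hx₀)
  have hBc : Convex ℝ B := hK.2.1.inter (convex_halfSpace_ge ((innerₗ _).flip θ).isLinear t)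
  have hB : IsCompact B := hK.1.inter_right (isClosed_le continuous_const (by fun_prop))
  calc volume {x | x ∈ K ∧ t < ⟪x, θ⟫} ≤ volume B := measure_mono hsub
    _ ≤ ENNReal.ofReal ((1 - α * (2 * (t / w)) ^ 2) ^ n) := by
        simpa [hvol] using
          (halfDifferenceVolumeIneq_euclideanSpace n).volume_le_of_gauge_half_sub_le hK hBc hB hc hcap
    _ ≤ _ := ENNReal.ofReal_le_ofReal (pow_one_sub_mul_sq_le_two_mul_exp hα.le hc n)

theorem psi2_decay_of_twoConvex {n : ℕ} (K : Set (EuclideanSpace ℝ (Fin n)))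
    (hK : IsSymmConvexBody K) (hvol : volume K = 1)
    (α : ℝ) (hα : 0 < α) (h2 : IsTwoConvex K α)
    (θ : EuclideanSpace ℝ (Fin n)) (hθ : ‖θ‖ = 1)
    (w : ℝ) (hw : IsLUB ((fun x => abs ⟪x, θ⟫) '' K) w)
    (t : ℝ) (ht : 0 < t) :
    volume {x | x ∈ K ∧ t < ⟪x, θ⟫} ≤
      ENNReal.ofReal (2 * Real.exp (-2 * α * n * (t / w) ^ 2)) :=
  psi2_decay_of_twoConvex_general K hK hvol α hα h2 θ w hw t ht
end
end

section
/- There exists a universal constant C > 0 with the following property. Let K ⊂ ℝⁿ be a centrally symmetric convex body which is 2-smooth with constant β > 0. Then the norm ‖·‖_K has type 2 with constant at most C·√β; that is, for every m ≥ 1 and every x₁, …, x_m ∈ ℝⁿ: 2^{−m} Σ_{ε∈{−1,1}^m} ‖Σ_{i=1}^m ε_i x_i‖_K² ≤ C²·β · Σ_{i=1}^m ‖x_i‖_K². -/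
open MeasureTheory
open scoped RealInnerProductSpace

noncomputable section

/-- The modulus of smoothness of `K`, defined via the gauge of `K`. -/
def modulusOfSmoothness {E : Type*} [AddCommGroup E] [Module ℝ E]
    (K : Set E) (τ : ℝ) : ℝ :=
  sSup { d | ∃ x y : E, gauge K x ≤ 1 ∧ gauge K y ≤ τ ∧
    d = (gauge K (x + y) + gauge K (x - y)) / 2 - 1 }

/-- `K` is 2-smooth with constant `β`: `ρ_K(τ) ≤ β τ²` for all `τ > 0`. -/
def IsTwoSmooth {E : Type*} [AddCommGroup E] [Module ℝ E]
    (K : Set E) (β : ℝ) : Prop :=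
  ∀ τ : ℝ, 0 < τ → modulusOfSmoothness K τ ≤ β * τ ^ 2

/-!
For a 2-smooth gauge `p`, rescaling `x` to the unit sphere turns `ρ(τ) ≤ βτ²` into
`p x (p (x + y) + p (x - y)) ≤ 2 p x² + 2β p y²`. Together with the triangle inequality
`|p (x + y) - p (x - y)| ≤ 2 p y` this gives the parallelogram-type inequality
`p (x + y)² + p (x - y)² ≤ 2 p x² + 18β p y²`, which, averaged over the sign of one
summand at a time, yields type 2 with constant `3√β` by induction on the number of summands.
-/

lemma sq_add_sq_le_of_sum_le {β a b A B : ℝ} (ha : 0 ≤ a) (hA : 0 ≤ A) (hB : 0 ≤ B)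
    (hAa : A ≤ a + b) (hBa : B ≤ a + b) (hAB : |A - B| ≤ 2 * b) (hβ : 0 < b → 1 / 4 ≤ β)
    (hsum : 0 < a → a * (A + B) ≤ 2 * a ^ 2 + 2 * β * b ^ 2) :
    A ^ 2 + B ^ 2 ≤ 2 * a ^ 2 + 18 * β * b ^ 2 := by
  have hAB2 : (A - B) ^ 2 ≤ 4 * b ^ 2 := by
    nlinarith [sq_le_sq' (neg_le_of_abs_le hAB) (le_of_abs_le hAB)]
  rcases (abs_nonneg _ |>.trans hAB).eq_or_lt' with hb | hb
  · obtain rfl : b = 0 := by linarith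
    nlinarith
  have hβ := hβ (by linarith)
  rcases ha.eq_or_lt with rfl | ha
  · nlinarith
  -- if `βb² ≤ a²` the bound on `A + B` is strong enough; otherwise `a < √β b` and the triangle
  -- inequality suffices
  rcases le_or_gt (β * b ^ 2) (a ^ 2) with hsmall | hlarge
  · have hsq : a ^ 2 * (A + B) ^ 2 ≤ a ^ 2 * (4 * a ^ 2 + 12 * β * b ^ 2) := by
      have := pow_le_pow_left₀ (by positivity) (hsum ha) 2
      nlinarith [mul_le_mul_of_nonneg_left hsmall (by positivity : 0 ≤ β * b ^ 2)]
    nlinarith [le_of_mul_le_mul_left hsq (by positivity)]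
  · nlinarith [sq_nonneg (a - b)]

section Seminorm
variable {E : Type*} [AddCommGroup E] [Module ℝ E]

theorem Seminorm.sq_add_sq_le_of_smooth {p : Seminorm ℝ E} {β : ℝ}
    (hp : ∀ x y, 0 < p x → p x * (p (x + y) + p (x - y)) ≤ 2 * p x ^ 2 + 2 * β * p y ^ 2)
    (x y : E) : p (x + y) ^ 2 + p (x - y) ^ 2 ≤ 2 * p x ^ 2 + 18 * β * p y ^ 2 := by
  have hquarter : 0 < p y → 1 / 4 ≤ β := fun hy => by
    -- at `x = y` with step `2y` both `p (x ± 2y)` are known exactly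
    have h := hp y ((2 : ℝ) • y) hy
    rw [show y + (2 : ℝ) • y = (3 : ℝ) • y by module, show y - (2 : ℝ) • y = -y by module,
      map_neg_eq_map, map_smul_eq_mul, map_smul_eq_mul] at h
    norm_num at h
    nlinarith [pow_pos hy 2]
  refine sq_add_sq_le_of_sum_le (apply_nonneg p x) (apply_nonneg p _) (apply_nonneg p _)
    (map_add_le_add p x y) (map_sub_le_add p x y) ?_ hquarter (hp x y)
  calc |p (x + y) - p (x - y)| ≤ p ((x + y) - (x - y)) := abs_sub_map_le_sub p _ _
    _ = 2 * p y := by rw [show x + y - (x - y) = (2 : ℝ) • y by module, map_smul_eq_mul]; norm_num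

end Seminorm

section Gauge
variable {E : Type*} [AddCommGroup E] [Module ℝ E] {K : Set E}

theorem le_modulusOfSmoothness (hbal : Balanced ℝ K) (hconv : Convex ℝ K) (habs : Absorbent ℝ K)
    {τ : ℝ} {x y : E} (hx : gauge K x ≤ 1) (hy : gauge K y ≤ τ) :
    (gauge K (x + y) + gauge K (x - y)) / 2 - 1 ≤ modulusOfSmoothness K τ := by
  let p := gaugeSeminorm hbal hconv habs
  refine le_csSup ⟨τ, ?_⟩ ⟨x, y, hx, hy, rfl⟩
  rintro _ ⟨x, y, hx, hy, rfl⟩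
  have hx : p x ≤ 1 := hx
  have hy : p y ≤ τ := hy
  show (p (x + y) + p (x - y)) / 2 - 1 ≤ τ
  linarith [map_add_le_add p x y, map_sub_le_add p x y]

theorem IsTwoSmooth.gauge_mul_add_le {β : ℝ} (hsm : IsTwoSmooth K β) (hbal : Balanced ℝ K)
    (hconv : Convex ℝ K) (habs : Absorbent ℝ K) (x y : E) (hx : 0 < gauge K x) :
    gauge K x * (gauge K (x + y) + gauge K (x - y)) ≤
      2 * gauge K x ^ 2 + 2 * β * gauge K y ^ 2 := by
  let p := gaugeSeminorm hbal hconv habs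
  change p x * (p (x + y) + p (x - y)) ≤ 2 * p x ^ 2 + 2 * β * p y ^ 2
  change 0 < p x at hx
  rcases (apply_nonneg p y).eq_or_lt with hy | hy
  · have hadd : p (x + y) ≤ p x + p y := map_add_le_add p x y
    have hsub : p (x - y) ≤ p x + p y := map_sub_le_add p x y
    rw [← hy] at hadd hsub ⊢
    nlinarith
  have hscale : ∀ z, p ((p x)⁻¹ • z) = p z / p x := fun z => by
    rw [map_smul_eq_mul, Real.norm_of_nonneg (inv_nonneg.2 hx.le), inv_mul_eq_div]
  have hx1 : p ((p x)⁻¹ • x) ≤ 1 := by rw [hscale, div_self hx.ne']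
  have h := (le_modulusOfSmoothness hbal hconv habs hx1 (hscale y).le).trans
    (hsm _ (div_pos hy hx))
  rw [← smul_add, ← smul_sub] at h
  change (p _ + p _) / 2 - 1 ≤ _ at h
  rw [hscale, hscale, div_pow] at h
  field_simp at h
  linarith

end Gauge

theorem sum_signs_le_of_parallelogram {F : Type*} [AddCommGroup F] [Module ℝ F] {f : F → ℝ}
    {c : ℝ} (hf : ∀ x y, f (x + y) + f (x - y) ≤ 2 * f x + 2 * c * f y) :
    ∀ {m : ℕ} (x : Fin m → F), ∑ ε : Fin m → Bool, f (∑ i, (if ε i then (1 : ℝ) else -1) • x i) ≤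
      2 ^ m * (f 0 + c * ∑ i, f (x i))
  | 0, x => by simp
  | m + 1, x => by
    have hsplit : ∀ ε : Fin m → Bool,
        ∑ b : Bool, f (∑ i, (if (Fin.cons b ε : Fin (m + 1) → Bool) i then (1 : ℝ) else -1) • x i)
          ≤ 2 * f (∑ i, (if ε i then (1 : ℝ) else -1) • x i.succ) + 2 * c * f (x 0) := fun ε => by
      simp only [Fintype.sum_bool, Fin.sum_univ_succ, Fin.cons_zero, Fin.cons_succ, if_true,
        Bool.false_eq_true, if_false, one_smul, neg_one_smul]
      rw [add_comm (x 0), neg_add_eq_sub]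
      exact hf _ _
    calc ∑ ε : Fin (m + 1) → Bool, f (∑ i, (if ε i then (1 : ℝ) else -1) • x i)
        = ∑ ε : Fin m → Bool, ∑ b : Bool,
            f (∑ i, (if (Fin.cons b ε : Fin (m + 1) → Bool) i then (1 : ℝ) else -1) • x i) :=
          ((Fintype.sum_equiv (Fin.consEquiv _) _ _ fun _ => rfl).symm.trans
            (Fintype.sum_prod_type_right _))
      _ ≤ ∑ ε : Fin m → Bool,
            (2 * f (∑ i, (if ε i then (1 : ℝ) else -1) • x i.succ) + 2 * c * f (x 0)) :=
          Finset.sum_le_sum fun ε _ => hsplit ε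
      _ ≤ 2 * (2 ^ m * (f 0 + c * ∑ i : Fin m, f (x i.succ))) + 2 ^ m * (2 * c * f (x 0)) := by
          rw [Finset.sum_add_distrib, ← Finset.mul_sum, Finset.sum_const, Finset.card_univ,
            Fintype.card_fun, Fintype.card_bool, Fintype.card_fin, nsmul_eq_mul, Nat.cast_pow,
            Nat.cast_ofNat]
          gcongr
          exact sum_signs_le_of_parallelogram hf _
      _ = 2 ^ (m + 1) * (f 0 + c * ∑ i, f (x i)) := by
          rw [Fin.sum_univ_succ]; ring

section SymmConvexBody
variable {E : Type*} [NormedAddCommGroup E] [NormedSpace ℝ E] {K : Set E}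

theorem IsSymmConvexBody.balanced (hK : IsSymmConvexBody K) : Balanced ℝ K :=
  (balanced_iff_neg_mem hK.2.1).2 fun _ hx => Set.mem_neg.1 (hK.2.2.2 ▸ hx)

theorem IsSymmConvexBody.zero_mem_interior (hK : IsSymmConvexBody K) : (0 : E) ∈ interior K := by
  obtain ⟨-, hconv, ⟨u, hu⟩, hsymm⟩ := hK
  have hnu : -u ∈ interior K := by
    rw [hsymm, ← Set.neg_preimage, ← Homeomorph.coe_neg, ← Homeomorph.preimage_interior,
      Set.mem_preimage, Homeomorph.coe_neg, neg_neg]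
    exact hu
  simpa using hconv.interior hu hnu (by norm_num : (0 : ℝ) ≤ 1 / 2) (by norm_num : (0 : ℝ) ≤ 1 / 2)
    (by norm_num)

theorem IsSymmConvexBody.absorbent (hK : IsSymmConvexBody K) : Absorbent ℝ K :=
  absorbent_nhds_zero (mem_interior_iff_mem_nhds.1 hK.zero_mem_interior)

theorem IsTwoSmooth.gauge_add_sq_add_gauge_sub_sq_le {β : ℝ} (hsm : IsTwoSmooth K β)
    (hK : IsSymmConvexBody K) (x y : E) :
    gauge K (x + y) ^ 2 + gauge K (x - y) ^ 2 ≤ 2 * gauge K x ^ 2 + 18 * β * gauge K y ^ 2 :=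
  Seminorm.sq_add_sq_le_of_smooth (p := gaugeSeminorm hK.balanced hK.2.1 hK.absorbent)
    (fun x y hx => hsm.gauge_mul_add_le hK.balanced hK.2.1 hK.absorbent x y hx) x y

end SymmConvexBody

theorem twoSmooth_type_two :
    ∃ C : ℝ, 0 < C ∧ ∀ (n : ℕ) (K : Set (EuclideanSpace ℝ (Fin n))) (β : ℝ),
      IsSymmConvexBody K → 0 < β → IsTwoSmooth K β →
      ∀ (m : ℕ), 1 ≤ m → ∀ x : Fin m → EuclideanSpace ℝ (Fin n),
        ((2 : ℝ) ^ m)⁻¹ *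
            ∑ ε : Fin m → Bool,
              gauge K (∑ i, (if ε i then (1 : ℝ) else -1) • x i) ^ 2 ≤
          C ^ 2 * β * ∑ i, gauge K (x i) ^ 2 := by
  refine ⟨3, by norm_num, fun n K β hK _ hsm m _ x => ?_⟩
  have h := sum_signs_le_of_parallelogram (f := fun v => gauge K v ^ 2) (c := 9 * β)
    (fun v w => by linarith [hsm.gauge_add_sq_add_gauge_sub_sq_le hK v w]) x
  simp only [gauge_zero, ne_eq, OfNat.ofNat_ne_zero, not_false_eq_true, zero_pow, zero_add] at h
  rw [inv_mul_le_iff₀ (by positivity)]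
  linarith
end
end
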